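/- arXiv:1902.04011 — 2 statements merged into one kernel-verified Lean document; each statement's English description precedes it below -/
import Mathlib

section
/- For every positive integer n there exists a finite group G and a finite-dimensional rational representation W of G such that the space of G-invariants W^G is zero, but for every subgroup H of G generated by at most n elements, the space of H-invariants W^H is nonzero. Concretely, G = (ℤ/2ℤ)^{n+1} with W the quotient of the rational regular representation by its subspace of G-invariants has this property. -/
/-! Over `ℚ` the averaging operator of a finite group `G` projects onto the invariants, and it
kills every `ρ g v - v`; hence a vector that is invariant modulo `V^G` is invariant, and
`(ℚ[G] / ℚ[G]^G)^G = 0`. For `G = (ℤ/2ℤ)^(n+1)`, a subgroup `H` generated by at most `n` elements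
lies in an `𝔽₂`-subspace of dimension `≤ n`, so `H ≠ G`; the indicator of `H` in `ℚ[G]` is then
fixed by `H` but not by `G`, and its image in the quotient is a nonzero `H`-invariant. -/

/-- The group `(ℤ/2ℤ)^(n+1)`, written multiplicatively. -/
abbrev ElemAbelianTwo (n : ℕ) : Type := Multiplicative (Fin (n + 1) → ZMod 2)

/-- The rational regular representation of `(ℤ/2ℤ)^(n+1)` (on `ℚ[G]`). -/
noncomputable def regRep (n : ℕ) :
    Representation ℚ (ElemAbelianTwo n) (ElemAbelianTwo n →₀ ℚ) :=
  { toFun := fun g => Finsupp.lmapDomain ℚ ℚ (g • ·)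
    map_one' := by ext x y; simp
    map_mul' := fun x y => by ext z w; simp [mul_assoc] }

/-- The quotient of the regular representation by its subspace of invariants. -/
noncomputable abbrev regQuot (n : ℕ) : Type :=
  (ElemAbelianTwo n →₀ ℚ) ⧸ (regRep n).invariants

lemma regRep_invariants_stable (n : ℕ) (g : ElemAbelianTwo n) :
    (regRep n).invariants ≤ ((regRep n).invariants).comap (regRep n g) := by
  intro v hv
  rw [Representation.mem_invariants] at hv
  rw [Submodule.mem_comap, Representation.mem_invariants]
  intro h
  have key : ∀ (a b : ElemAbelianTwo n) (w : ElemAbelianTwo n →₀ ℚ),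
      regRep n a (regRep n b w) = regRep n (a * b) w := by
    intro a b w; rw [map_mul]; rfl
  rw [key, mul_comm, ← key, hv h]

/-- The representation of `(ℤ/2ℤ)^(n+1)` on the quotient of its regular representation
by the invariants. -/
noncomputable def regQuotRep (n : ℕ) : Representation ℚ (ElemAbelianTwo n) (regQuot n) where
  toFun g := Submodule.mapQ _ _ (regRep n g) (regRep_invariants_stable n g)
  map_one' := by
    apply Submodule.linearMap_qext
    refine LinearMap.ext fun x => ?_
    simp only [LinearMap.comp_apply, Submodule.mkQ_apply, Submodule.mapQ_apply,
      map_one, Module.End.one_apply]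
  map_mul' g h := by
    apply Submodule.linearMap_qext
    refine LinearMap.ext fun x => ?_
    simp only [LinearMap.comp_apply, Submodule.mkQ_apply, Submodule.mapQ_apply,
      Module.End.mul_apply, map_mul]


namespace Representation

section Averaging

variable {k G V : Type*} [CommRing k] [Group G] [Fintype G] [Invertible (Fintype.card G : k)]
  [AddCommGroup V] [Module k V] (ρ : Representation k G V)

theorem averageMap_apply_self (g : G) (v : V) : ρ.averageMap (ρ g v) = ρ.averageMap v := by
  rw [averageMap, ← asAlgebraHom_single_one, ← Module.End.mul_apply, ← map_mul,
    GroupAlgebra.mul_average_right]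

theorem mem_invariants_of_forall_sub_mem_invariants {v : V}
    (h : ∀ g, ρ g v - v ∈ ρ.invariants) : v ∈ ρ.invariants := fun g => by
  -- the averaging projection both fixes `ρ g v - v` and kills it
  have := ρ.averageMap_id _ (h g)
  rw [map_sub, averageMap_apply_self, sub_self] at this
  exact sub_eq_zero.1 this.symm

theorem quotient_invariants_eq_bot (le_comap : ∀ g, ρ.invariants ≤ ρ.invariants.comap (ρ g)) :
    (ρ.quotient ρ.invariants le_comap).invariants = ⊥ := by
  refine (Submodule.eq_bot_iff _).2 fun w hw => ?_
  obtain ⟨v, rfl⟩ := Submodule.Quotient.mk_surjective _ w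
  refine (Submodule.Quotient.mk_eq_zero _).2 (ρ.mem_invariants_of_forall_sub_mem_invariants
    fun g => (Submodule.Quotient.eq _).1 (hw g))

end Averaging

section ULift

universe u v

noncomputable def ulift {k G V : Type*} [CommSemiring k] [Monoid G] [AddCommMonoid V]
    [Module k V] (ρ : Representation k G V) : Representation k (ULift.{u} G) (ULift.{v} V) :=
  ((ULift.moduleEquiv.symm : V ≃ₗ[k] ULift.{v} V).conjAlgEquiv k).toMonoidHom.comp
    (ρ.comp MulEquiv.ulift.toMonoidHom)

variable {k G V : Type*} [CommRing k] [Group G] [AddCommGroup V] [Module k V]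
  {ρ : Representation k G V}

theorem invariants_ulift_eq_bot (h : ρ.invariants = ⊥) : (ρ.ulift.{u, v}).invariants = ⊥ := by
  refine (Submodule.eq_bot_iff _).2 fun w hw => ULift.down_injective ?_
  exact (Submodule.eq_bot_iff _).1 h w.down fun g => congrArg ULift.down (hw (ULift.up g))

theorem exists_ne_zero_forall_mem_closure_ulift {n : ℕ}
    (h : ∀ S : Finset G, S.card ≤ n →
      ∃ v : V, v ≠ 0 ∧ ∀ g ∈ Subgroup.closure (S : Set G), ρ g v = v)
    (S : Finset (ULift.{u} G)) (hS : S.card ≤ n) :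
    ∃ w : ULift.{v} V, w ≠ 0 ∧ ∀ g ∈ Subgroup.closure (S : Set (ULift G)), ρ.ulift g w = w := by
  classical
  obtain ⟨v, hv, hfix⟩ := h (S.image ULift.down) (Finset.card_image_le.trans hS)
  refine ⟨ULift.up v, fun h0 => hv (congrArg ULift.down h0),
    fun g hg => congrArg ULift.up (hfix g.down ?_)⟩
  have := Subgroup.mem_map_of_mem MulEquiv.ulift.toMonoidHom hg
  rwa [MonoidHom.map_closure, ← Finset.coe_image] at this

end ULift

end Representation

theorem Subgroup.closure_ne_top_of_card_lt_finrank {K V : Type*} [DivisionRing K]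
    [AddCommGroup V] [Module K V] [FiniteDimensional K V] (S : Finset (Multiplicative V))
    (hS : S.card < Module.finrank K V) : Subgroup.closure (S : Set (Multiplicative V)) ≠ ⊤ := by
  classical
  set T := S.image Multiplicative.toAdd
  have hspan : Submodule.span K (T : Set V) ≠ ⊤ := fun htop => by
    have := finrank_span_finset_le_card (R := K) T
    rw [Set.finrank, htop, finrank_top] at this
    exact (this.trans Finset.card_image_le).not_gt hS
  refine fun htop => hspan (eq_top_iff.2 fun x _ => ?_)
  have hle : Subgroup.closure (S : Set (Multiplicative V)) ≤
      (Submodule.span K (T : Set V)).toAddSubgroup.toSubgroup :=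
    (Subgroup.closure_le _).2 fun s hs => show Multiplicative.toAdd s ∈ _ from
      Submodule.subset_span (Finset.mem_coe.2 (Finset.mem_image_of_mem _ hs))
  exact hle (htop ▸ Subgroup.mem_top (Multiplicative.ofAdd x))

theorem ElemAbelianTwo.closure_ne_top {n : ℕ} (S : Finset (ElemAbelianTwo n)) (hS : S.card ≤ n) :
    Subgroup.closure (S : Set (ElemAbelianTwo n)) ≠ ⊤ :=
  Subgroup.closure_ne_top_of_card_lt_finrank (K := ZMod 2) S (by
    rw [Module.finrank_fin_fun]; omega)

theorem regRep_apply (n : ℕ) (g x : ElemAbelianTwo n) (f : ElemAbelianTwo n →₀ ℚ) :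
    regRep n g f x = f (g⁻¹ * x) := by
  change Finsupp.mapDomain (g • ·) f x = _
  simpa using Finsupp.mapDomain_apply (MulAction.injective g) f (g⁻¹ * x)

open Classical in
noncomputable def regIndicator (n : ℕ) (H : Subgroup (ElemAbelianTwo n)) :
    ElemAbelianTwo n →₀ ℚ :=
  Finsupp.equivFunOnFinite.symm fun x => if x ∈ H then 1 else 0

theorem regRep_regIndicator_eq_iff {n : ℕ} (H : Subgroup (ElemAbelianTwo n))
    (g : ElemAbelianTwo n) : regRep n g (regIndicator n H) = regIndicator n H ↔ g ∈ H := by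
  constructor
  · intro h
    simpa [regRep_apply, regIndicator] using congrArg (· g) h
  · intro hg
    ext x
    simp only [regRep_apply, regIndicator, Finsupp.equivFunOnFinite_symm_apply_apply]
    classical
    exact if_congr (H.mul_mem_cancel_left (H.inv_mem hg)) rfl rfl

theorem exists_regQuotRep_fixed_ne_zero {n : ℕ} {H : Subgroup (ElemAbelianTwo n)} (hH : H ≠ ⊤) :
    ∃ w : regQuot n, w ≠ 0 ∧ ∀ g ∈ H, regQuotRep n g w = w := by
  obtain ⟨g₀, -, hg₀⟩ := SetLike.exists_of_lt hH.lt_top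
  refine ⟨Submodule.Quotient.mk (regIndicator n H), fun h0 => hg₀ ?_, fun g hg => ?_⟩
  · exact (regRep_regIndicator_eq_iff H g₀).1 ((Submodule.Quotient.mk_eq_zero _).1 h0 g₀)
  · exact congrArg Submodule.Quotient.mk ((regRep_regIndicator_eq_iff H g).2 hg)

open Representation in
theorem exists_rep_with_no_G_invariants_but_H_invariants_general
    (n : ℕ) :
    (∃ (G : GrpCat) (_ : Finite G) (W : ModuleCat ℚ) (ρ : Representation ℚ G W),
      FiniteDimensional ℚ W ∧
      (∀ w : W, (∀ g : G, ρ g w = w) → w = 0) ∧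
      (∀ S : Finset G, S.card ≤ n → ∃ w : W, w ≠ 0 ∧
        ∀ g ∈ Subgroup.closure (S : Set G), ρ g w = w)) ∧
    (FiniteDimensional ℚ (regQuot n) ∧
      (∀ w : regQuot n, (∀ g : ElemAbelianTwo n, regQuotRep n g w = w) → w = 0) ∧
      (∀ S : Finset (ElemAbelianTwo n), S.card ≤ n → ∃ w : regQuot n, w ≠ 0 ∧
        ∀ g ∈ Subgroup.closure (S : Set (ElemAbelianTwo n)), regQuotRep n g w = w)) := by
  have hfree : (regQuotRep n).invariants = ⊥ := (regRep n).quotient_invariants_eq_bot _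
  have hfixed (S : Finset (ElemAbelianTwo n)) (hS : S.card ≤ n) :
      ∃ w : regQuot n, w ≠ 0 ∧
        ∀ g ∈ Subgroup.closure (S : Set (ElemAbelianTwo n)), regQuotRep n g w = w :=
    exists_regQuotRep_fixed_ne_zero (ElemAbelianTwo.closure_ne_top S hS)
  -- `GrpCat` and `ModuleCat` here have arbitrary universe levels, hence the `ULift`s
  refine ⟨⟨GrpCat.of (ULift (ElemAbelianTwo n)), inferInstance,
    ModuleCat.of ℚ (ULift (regQuot n)), (regQuotRep n).ulift, inferInstance,
    (Submodule.eq_bot_iff _).1 (invariants_ulift_eq_bot hfree),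
    exists_ne_zero_forall_mem_closure_ulift hfixed⟩,
    inferInstance, (Submodule.eq_bot_iff _).1 hfree, hfixed⟩

/-- for every `n > 0` there is a finite group `G` and a finite-dimensional
rational representation `W` of `G` with `W^G = 0` but `W^H ≠ 0` for every subgroup `H`
generated by at most `n` elements; concretely, `G = (ℤ/2ℤ)^(n+1)` acting on the
quotient of its rational regular representation by the invariants has this property. -/
theorem exists_rep_with_no_G_invariants_but_H_invariants
    (n : ℕ) (hn : 0 < n) :
    (∃ (G : GrpCat) (_ : Finite G) (W : ModuleCat ℚ) (ρ : Representation ℚ G W),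
      FiniteDimensional ℚ W ∧
      (∀ w : W, (∀ g : G, ρ g w = w) → w = 0) ∧
      (∀ S : Finset G, S.card ≤ n → ∃ w : W, w ≠ 0 ∧
        ∀ g ∈ Subgroup.closure (S : Set G), ρ g w = w)) ∧
    (FiniteDimensional ℚ (regQuot n) ∧
      (∀ w : regQuot n, (∀ g : ElemAbelianTwo n, regQuotRep n g w = w) → w = 0) ∧
      (∀ S : Finset (ElemAbelianTwo n), S.card ≤ n → ∃ w : regQuot n, w ≠ 0 ∧
        ∀ g ∈ Subgroup.closure (S : Set (ElemAbelianTwo n)), regQuotRep n g w = w)) :=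
  exists_rep_with_no_G_invariants_but_H_invariants_general n
end

section
/- Every PAC field is ample: if every geometrically irreducible variety over K has a K-point, then every smooth curve over K with at least one K-point has infinitely many K-points. Key lemma: if X is a smooth (hence geometrically reduced) curve over K and P is a K-rational point of X, then P lies on a geometrically irreducible component of X; more precisely, any K-point on a K-irreducible but not geometrically irreducible curve is a singular point, since it must lie on at least two geometric components. -/
open MvPolynomial

section Telescope
variable {n : ℕ} {A : Type*} [CommRing A]

theorem telescope (v : Fin n → MvPolynomial (Fin n) A) (p : MvPolynomial (Fin n) A) :
    p - eval₂ C v p ∈ Ideal.span (Set.range fun i => (X i : MvPolynomial (Fin n) A) - v i) := by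
  induction p using MvPolynomial.induction_on with
  | C a => simp
  | add p q hp hq =>
      have : p + q - eval₂ C v (p + q) = (p - eval₂ C v p) + (q - eval₂ C v q) := by
        rw [eval₂_add]; ring
      rw [this]; exact Ideal.add_mem _ hp hq
  | mul_X p i hp =>
      have h1 : p * X i - eval₂ C v (p * X i) =
          (p - eval₂ C v p) * X i + eval₂ C v p * (X i - v i) := by
        rw [eval₂_mul, eval₂_X]; ring
      rw [h1]
      exact Ideal.add_mem _ (Ideal.mul_mem_right _ _ hp)
        (Ideal.mul_mem_left _ _ (Ideal.subset_span ⟨i, rfl⟩))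
end Telescope


section Descent

variable {K L : Type*} [Field K] [Field L] [Algebra K L] {σ : Type*}

example : UniqueFactorizationMonoid (MvPolynomial (Fin 2) K) := inferInstance

noncomputable def lamc (lam : L →ₗ[K] K) (w : MvPolynomial σ L) : MvPolynomial σ K :=
  ∑ m ∈ w.support, monomial m (lam (coeff m w))

theorem coeff_lamc (lam : L →ₗ[K] K) (w : MvPolynomial σ L) (m : σ →₀ ℕ) :
    coeff m (lamc lam w) = lam (coeff m w) := by
  classical
  rw [lamc, coeff_sum]
  simp only [coeff_monomial]
  rw [Finset.sum_ite_eq' w.support m (fun m' => lam (coeff m' w))]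
  split
  · rfl
  · next h => rw [notMem_support_iff.mp h, map_zero]

theorem lamc_mul (lam : L →ₗ[K] K) (u : MvPolynomial σ K) (w : MvPolynomial σ L) :
    lamc lam (MvPolynomial.map (algebraMap K L) u * w) = u * lamc lam w := by
  classical
  apply MvPolynomial.ext
  intro m
  rw [coeff_lamc, coeff_mul, coeff_mul, map_sum]
  apply Finset.sum_congr rfl
  intro p _
  rw [coeff_map, coeff_lamc, ← Algebra.smul_def, map_smul, smul_eq_mul]

theorem reconstruct {ι : Type*} (b : Module.Basis ι K L) (w : MvPolynomial σ L) :
    ∃ T : Finset ι, w = ∑ i ∈ T,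
      C (b i) * MvPolynomial.map (algebraMap K L) (lamc (b.coord i) w) := by
  classical
  refine ⟨w.support.biUnion (fun m => (b.repr (coeff m w)).support), ?_⟩
  apply MvPolynomial.ext
  intro m
  rw [coeff_sum]
  simp only [coeff_C_mul, coeff_map, coeff_lamc, Module.Basis.coord_apply]
  have key : ∀ (T : Finset ι), (b.repr (coeff m w)).support ⊆ T →
      coeff m w = ∑ i ∈ T, b i * algebraMap K L (b.repr (coeff m w) i) := by
    intro T hT
    have h0 := b.linearCombination_repr (coeff m w)
    rw [Finsupp.linearCombination_apply] at h0
    rw [Finsupp.sum_of_support_subset _ hT (fun i a => a • b i) (fun i _ => zero_smul _ _)] at h0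
    conv_lhs => rw [← h0]
    apply Finset.sum_congr rfl; intro i _; rw [Algebra.smul_def]; ring
  by_cases hm : m ∈ w.support
  · exact key _ (Finset.subset_biUnion_of_mem (fun m => (b.repr (coeff m w)).support) hm)
  · rw [notMem_support_iff.mp hm]
    simp

theorem dvd_descend (f g : MvPolynomial σ K) (hrel : IsRelPrime f g) (w : MvPolynomial σ L)
    (hf : MvPolynomial.map (algebraMap K L) f ∣ w)
    (hg : MvPolynomial.map (algebraMap K L) g ∣ w) :
    MvPolynomial.map (algebraMap K L) (f * g) ∣ w := by
  classical
  obtain ⟨u, rfl⟩ := hf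
  set al := algebraMap K L with hal
  set b : Module.Basis _ K L := Module.Basis.ofVectorSpace K L
  have hcoord : ∀ lam : L →ₗ[K] K, f * g ∣ lamc lam (MvPolynomial.map al f * u) := by
    intro lam
    have h1 : f ∣ lamc lam (MvPolynomial.map al f * u) := by
      rw [lamc_mul]; exact dvd_mul_right _ _
    have h2 : g ∣ lamc lam (MvPolynomial.map al f * u) := by
      obtain ⟨v, hv⟩ := hg
      rw [hv, lamc_mul]; exact dvd_mul_right _ _
    exact hrel.mul_dvd h1 h2
  obtain ⟨T, hT⟩ := reconstruct b (MvPolynomial.map al f * u)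
  rw [hT]
  apply Finset.dvd_sum
  intro i _
  obtain ⟨t, ht⟩ := hcoord (b.coord i)
  exact ⟨C (b i) * MvPolynomial.map al t, by rw [ht, map_mul, map_mul]; ring⟩

end Descent


section Lin
variable {L : Type*} [Field L]

theorem prime_X_sub_C {n : ℕ} (i : Fin n) (a : L) :
    Prime ((X i : MvPolynomial (Fin n) L) - C a) := by
  classical
  have hne : (X i : MvPolynomial (Fin n) L) - C a ≠ 0 := by
    intro h
    have := congrArg (eval (fun _ => a + 1)) h
    simp at this
  rw [← Ideal.span_singleton_prime hne]
  set v : Fin n → MvPolynomial (Fin n) L := fun j => if j = i then C a else X j with hv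
  have hker : Ideal.span {(X i : MvPolynomial (Fin n) L) - C a} =
      RingHom.ker (eval₂Hom (C : L →+* MvPolynomial (Fin n) L) v) := by
    apply le_antisymm
    · rw [Ideal.span_le]
      intro x hx
      rw [Set.mem_singleton_iff] at hx; subst hx
      simp [RingHom.mem_ker, hv]
    · intro p hp
      rw [RingHom.mem_ker, coe_eval₂Hom] at hp
      have h2 := telescope v p
      rw [hp, sub_zero] at h2
      refine Ideal.span_le.mpr ?_ h2
      rintro x ⟨j, rfl⟩
      by_cases hj : j = i
      · subst hj; rw [hv]; simp [Ideal.mem_span_singleton]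
      · simp [hv, hj]
  rw [hker]
  exact RingHom.ker_isPrime _

theorem two_linear {a b : L} {w : MvPolynomial (Fin 2) L} (hw : ¬IsUnit w)
    (h0 : w ∣ X 0 - C a) (h1 : w ∣ X 1 - C b) : False := by
  have hp := prime_X_sub_C (0 : Fin 2) a
  obtain ⟨u, hu⟩ := h0
  rcases hp.irreducible.isUnit_or_isUnit hu with hwu | huu
  · exact hw hwu
  · have hassoc : Associated w (X 0 - C a) := by
      rw [hu]; exact (associated_mul_unit_right w u huu).symm.symm
    have hdvd : (X 0 - C a : MvPolynomial (Fin 2) L) ∣ X 1 - C b :=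
      hassoc.symm.dvd.trans h1
    obtain ⟨t, ht⟩ := hdvd
    have := congrArg (eval (![a, b + 1] : Fin 2 → L)) ht
    simp at this
end Lin


variable {K : Type} [Field K]

local notation "K̄" => AlgebraicClosure K

-- integrality of the polynomial map
theorem mv_map_isIntegral {n : ℕ} :
    ∀ x : MvPolynomial (Fin n) K̄,
      (MvPolynomial.map (algebraMap K K̄) : MvPolynomial (Fin n) K →+* MvPolynomial (Fin n) K̄).IsIntegralElem x := by
  intro x
  induction x using MvPolynomial.induction_on with
  | C a =>
      have ha : IsIntegral K a := Algebra.IsIntegral.isIntegral a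
      obtain ⟨p, hpm, hp⟩ := ha
      refine ⟨p.map (C : K →+* MvPolynomial (Fin n) K), hpm.map _, ?_⟩
      rw [Polynomial.eval₂_map]
      have hcomp : (MvPolynomial.map (algebraMap K K̄) :
            MvPolynomial (Fin n) K →+* MvPolynomial (Fin n) K̄).comp (C : K →+* MvPolynomial (Fin n) K)
          = (C : K̄ →+* MvPolynomial (Fin n) K̄).comp (algebraMap K K̄) := by
        ext x
        simp
      rw [hcomp, ← Polynomial.hom_eval₂]
      rw [hp, map_zero]
  | add p q hp hq => exact hp.add _ hq
  | mul_X p i hp =>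
      refine hp.mul _ ⟨Polynomial.X - Polynomial.C (X i), ?_, ?_⟩
      · exact (Polynomial.monic_X_sub_C _)
      · simp
theorem key_vanish (f : MvPolynomial (Fin 2) K) (hf : Irreducible f)
    (c : MvPolynomial (Fin 2) K̄) (hc : Irreducible c)
    (hdvd : c ∣ MvPolynomial.map (algebraMap K K̄) f)
    (P : Fin 2 → K) (hP : eval P f = 0) :
    eval (fun i => algebraMap K K̄ (P i)) c = 0 := by
  classical
  set φ : MvPolynomial (Fin 2) K →+* MvPolynomial (Fin 2) K̄ :=
    MvPolynomial.map (algebraMap K K̄) with hφ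
  have hφinj : Function.Injective φ :=
    MvPolynomial.map_injective _ (algebraMap K K̄).injective
  letI : Algebra (MvPolynomial (Fin 2) K) (MvPolynomial (Fin 2) K̄) := φ.toAlgebra
  haveI : Algebra.IsIntegral (MvPolynomial (Fin 2) K) (MvPolynomial (Fin 2) K̄) :=
    ⟨fun x => mv_map_isIntegral x⟩
  have halg : (algebraMap (MvPolynomial (Fin 2) K) (MvPolynomial (Fin 2) K̄)) = φ := rfl
  set mP : Ideal (MvPolynomial (Fin 2) K) := RingHom.ker (eval P) with hmP
  haveI hmPprime : mP.IsPrime := RingHom.ker_isPrime _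
  have hle : (Ideal.span {c}).comap (algebraMap (MvPolynomial (Fin 2) K) (MvPolynomial (Fin 2) K̄)) ≤ mP := by
    intro g hg
    rw [Ideal.mem_comap, halg, Ideal.mem_span_singleton] at hg
    -- show f ∣ g
    have hfg : f ∣ g := by
      by_contra hfg
      have hg0 : g ≠ 0 := by rintro rfl; exact hfg (dvd_zero f)
      have hrel : IsRelPrime f g := by
        intro d hdf hdg
        obtain ⟨e, he⟩ := hdf
        rcases hf.isUnit_or_isUnit he with h | h
        · exact h
        · exfalso
          apply hfg
          have hassoc : Associated d f := he ▸ (associated_mul_unit_right d e h).symm.symm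
          exact hassoc.symm.dvd.trans hdg
      obtain ⟨u, hu⟩ := hg
      obtain ⟨v, hv⟩ := hdvd
      have hw1 : φ f ∣ φ f * u := dvd_mul_right _ _
      have hw2 : φ g ∣ φ f * u := by
        rw [hu, hv]; exact ⟨v, by ring⟩
      have := dvd_descend f g hrel (φ f * u) hw1 hw2
      rw [map_mul] at this
      have hfne : φ f ≠ 0 := fun h => hf.ne_zero (hφinj (by simp [h]))
      have hgdvd : φ g ∣ u := (mul_dvd_mul_iff_left hfne).mp this
      obtain ⟨t, ht⟩ := hgdvd
      have hune : u ≠ 0 := by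
        intro h0
        apply hg0
        apply hφinj
        rw [hu, h0, mul_zero, map_zero]
      have hze : u * (c * t - 1) = 0 := by
        have h2 : u * (c * t - 1) = c * u * t - u := by ring
        rw [h2, ← hu, ← ht, sub_self]
      rcases mul_eq_zero.mp hze with h | h
      · exact hune h
      · exact hc.not_isUnit (IsUnit.of_mul_eq_one (a := c) t (sub_eq_zero.mp h))
    obtain ⟨t, rfl⟩ := hfg
    rw [hmP, RingHom.mem_ker, map_mul, hP, zero_mul]
  obtain ⟨Q, hQI, hQprime, hQcomap⟩ :=
    Ideal.exists_ideal_over_prime_of_isIntegral mP (Ideal.span {c}) hle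
  have hXi : ∀ i : Fin 2, (X i : MvPolynomial (Fin 2) K̄) - C (algebraMap K K̄ (P i)) ∈ Q := by
    intro i
    have h1 : (X i : MvPolynomial (Fin 2) K) - C (P i) ∈ mP := by
      rw [hmP, RingHom.mem_ker]; simp
    rw [← hQcomap, Ideal.mem_comap, halg] at h1
    simpa only [hφ, map_sub, MvPolynomial.map_X, MvPolynomial.map_C] using h1
  have htel := telescope (fun i => (C (algebraMap K K̄ (P i)) : MvPolynomial (Fin 2) K̄)) c
  have hCev : eval₂ C (fun i => (C (algebraMap K K̄ (P i)) : MvPolynomial (Fin 2) K̄)) c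
      = C (eval (fun i => algebraMap K K̄ (P i)) c) := by
    rw [← eval₂_id (g := fun i => algebraMap K K̄ (P i)) c, eval₂_comp_left C]
    rfl
  have hmem : c - C (eval (fun i => algebraMap K K̄ (P i)) c) ∈ Q := by
    rw [← hCev]
    refine Ideal.span_le.mpr ?_ htel
    rintro x ⟨i, rfl⟩
    exact hXi i
  have hcQ : c ∈ Q := hQI (Ideal.subset_span rfl)
  have hCQ : C (eval (fun i => algebraMap K K̄ (P i)) c) ∈ Q := by
    have := Q.sub_mem hcQ hmem
    simpa using this
  by_contra hne
  exact hQprime.ne_top (Q.eq_top_of_isUnit_mem hCQ (((isUnit_iff_ne_zero.mpr hne).map (C : K̄ →+* MvPolynomial (Fin 2) K̄))))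


theorem eval_map_algebraMap {σ : Type*} (g : MvPolynomial σ K) (P : σ → K) :
    eval (fun i => algebraMap K K̄ (P i)) (MvPolynomial.map (algebraMap K K̄) g)
      = algebraMap K K̄ (eval P g) := by
  rw [eval_map, ← eval₂_id (g := P) g, eval₂_comp_left (algebraMap K K̄)]
  rfl

theorem partB (f : MvPolynomial (Fin 2) K) (hf : Irreducible f)
    (hni : ¬ Irreducible (MvPolynomial.map (algebraMap K K̄) f))
    (P : Fin 2 → K) (hP : eval P f = 0) :
    eval P (pderiv 0 f) = 0 ∧ eval P (pderiv 1 f) = 0 := by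
  classical
  set al := algebraMap K K̄ with hal
  set φ : MvPolynomial (Fin 2) K →+* MvPolynomial (Fin 2) K̄ := MvPolynomial.map al with hφ
  set Pb : Fin 2 → K̄ := fun i => al (P i) with hPb
  have hφinj : Function.Injective φ := MvPolynomial.map_injective _ al.injective
  have hfne : φ f ≠ 0 := fun h => hf.ne_zero (hφinj (by simp [h]))
  have hPf : eval Pb (φ f) = 0 := by
    rw [hφ, hPb, eval_map_algebraMap, hP, map_zero]
  have hfnu : ¬ IsUnit (φ f) := by
    intro hu
    obtain ⟨v, hv⟩ := hu.exists_right_inv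
    have := congrArg (eval Pb) hv
    rw [map_mul, hPf, zero_mul, map_one] at this
    exact zero_ne_one this
  -- get two non-unit factors
  have hab : ∃ a b : MvPolynomial (Fin 2) K̄, φ f = a * b ∧ ¬IsUnit a ∧ ¬IsUnit b := by
    by_contra hcon
    push_neg at hcon
    refine hni ⟨hfnu, fun a b hab0 => ?_⟩
    by_cases ha : IsUnit a
    · exact Or.inl ha
    · exact Or.inr (hcon a b hab0 ha)
  obtain ⟨a, b, hfab, hanu, hbnu⟩ := hab
  -- every nonunit divisor vanishes at Pb
  have hvan : ∀ w : MvPolynomial (Fin 2) K̄, ¬IsUnit w → w ∣ φ f → eval Pb w = 0 := by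
    intro w hwnu hwdvd
    have hw0 : w ≠ 0 := by rintro rfl; exact hfne (zero_dvd_iff.mp hwdvd)
    obtain ⟨c, hcirr, hcdvd⟩ := WfDvdMonoid.exists_irreducible_factor hwnu hw0
    have hcP : eval Pb c = 0 := key_vanish f hf c hcirr (hcdvd.trans hwdvd) P hP
    obtain ⟨t, rfl⟩ := hcdvd
    rw [map_mul, hcP, zero_mul]
  have haP : eval Pb a = 0 := hvan a hanu ⟨b, hfab⟩
  have hbP : eval Pb b = 0 := hvan b hbnu ⟨a, by rw [hfab]; ring⟩
  have hder : ∀ i : Fin 2, eval P (pderiv i f) = 0 := by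
    intro i
    have h1 : eval Pb (pderiv i (φ f)) = 0 := by
      rw [hfab, pderiv_mul, map_add, map_mul, map_mul, haP, hbP, mul_zero, zero_mul, add_zero]
    rw [hφ, pderiv_map, hPb, hal, eval_map_algebraMap] at h1
    exact al.injective (by rw [h1, map_zero])
  exact ⟨hder 0, hder 1⟩


section Gadget
variable {L : Type*} [Field L]



theorem gadget_prime {F : Type*} [Field F] (g h : MvPolynomial (Fin 2) L)
    (τ : MvPolynomial (Fin 2) L →+* F) (hτg : τ g = 0) (hdl : ∀ w, τ w = 0 → g ∣ w)
    (hτh : τ h ≠ 0) :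
    (Ideal.span {rename Fin.succ g,
      (X 0 : MvPolynomial (Fin 3) L) * rename Fin.succ h - 1}).IsPrime := by
  classical
  set G : MvPolynomial (Fin 3) L := rename Fin.succ g with hG
  set H : MvPolynomial (Fin 3) L := rename Fin.succ h with hH
  set I : Ideal (MvPolynomial (Fin 3) L) := Ideal.span {G, X 0 * H - 1} with hI
  have hGI : G ∈ I := Ideal.subset_span (Set.mem_insert _ _)
  have hgen2 : (X 0 : MvPolynomial (Fin 3) L) * H - 1 ∈ I :=
    Ideal.subset_span (Set.mem_insert_of_mem _ rfl)
  set v : Fin 3 → F := Fin.cases ((τ h)⁻¹) (fun i => τ (X i)) with hv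
  set ψ : MvPolynomial (Fin 3) L →+* F := eval₂Hom (τ.comp (C : L →+* MvPolynomial (Fin 2) L)) v
    with hψ
  have hψρ : ∀ w : MvPolynomial (Fin 2) L, ψ (rename Fin.succ w) = τ w := by
    intro w
    rw [hψ, coe_eval₂Hom, eval₂_rename]
    have hvs : v ∘ Fin.succ = fun i => τ (X i) := by
      funext i; simp [hv]
    rw [hvs]
    have := eval₂_comp_left τ (C : L →+* MvPolynomial (Fin 2) L) X w
    rw [eval₂_eta] at this
    exact this.symm
  have hψX0 : ψ (X 0) = (τ h)⁻¹ := by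
    rw [hψ, eval₂Hom_X']
    simp [hv]
  have hψG : ψ G = 0 := by rw [hG, hψρ, hτg]
  have hψ2 : ψ (X 0 * H - 1) = 0 := by
    rw [map_sub, map_mul, map_one, hψX0, hH, hψρ, inv_mul_cancel₀ hτh, sub_self]
  have hIker : I ≤ RingHom.ker ψ := by
    rw [hI, Ideal.span_le]
    intro x hx
    rcases hx with rfl | hx
    · exact hψG
    · rw [Set.mem_singleton_iff] at hx; subst hx; exact hψ2
  have hC1 : ∀ w : MvPolynomial (Fin 3) L, ∃ (N : ℕ) (r : MvPolynomial (Fin 2) L),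
      H ^ N * w - rename Fin.succ r ∈ I := by
    intro w
    induction w using MvPolynomial.induction_on with
    | C a =>
        refine ⟨0, C a, ?_⟩
        rw [pow_zero, one_mul, rename_C, sub_self]
        exact I.zero_mem
    | add p q hp hq =>
        obtain ⟨Np, rp, hp⟩ := hp
        obtain ⟨Nq, rq, hq⟩ := hq
        refine ⟨Np + Nq, h ^ Nq * rp + h ^ Np * rq, ?_⟩
        have h1 : rename Fin.succ (h ^ Nq * rp + h ^ Np * rq)
            = H ^ Nq * rename Fin.succ rp + H ^ Np * rename Fin.succ rq := by
          rw [map_add, map_mul, map_mul, map_pow, map_pow, hH]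
        rw [h1, pow_add]
        have h2 : H ^ Np * H ^ Nq * (p + q)
              - (H ^ Nq * rename Fin.succ rp + H ^ Np * rename Fin.succ rq)
            = H ^ Nq * (H ^ Np * p - rename Fin.succ rp)
              + H ^ Np * (H ^ Nq * q - rename Fin.succ rq) := by ring
        rw [h2]
        exact I.add_mem (I.mul_mem_left _ hp) (I.mul_mem_left _ hq)
    | mul_X p i hp =>
        obtain ⟨N, r, hN⟩ := hp
        rcases Fin.eq_zero_or_eq_succ i with rfl | ⟨j, rfl⟩
        · refine ⟨N + 1, r, ?_⟩
          have h2 : H ^ (N + 1) * (p * X 0) - rename Fin.succ r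
              = (H ^ N * p - rename Fin.succ r) + H ^ N * p * (X 0 * H - 1) := by ring
          rw [h2]
          exact I.add_mem hN (I.mul_mem_left _ hgen2)
        · refine ⟨N, r * X j, ?_⟩
          have h2 : rename Fin.succ (r * X j) = rename Fin.succ r * X j.succ := by
            rw [map_mul, rename_X]
          rw [h2]
          have h3 : H ^ N * (p * X j.succ) - rename Fin.succ r * X j.succ
              = (H ^ N * p - rename Fin.succ r) * X j.succ := by ring
          rw [h3]
          exact I.mul_mem_right _ hN
  have hC2 : ∀ w : MvPolynomial (Fin 3) L, ∀ N : ℕ, H ^ N * w ∈ I → w ∈ I := by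
    intro w N hw
    have hpow : ((X 0 : MvPolynomial (Fin 3) L) * H) ^ N - 1 ∈ I := by
      obtain ⟨t, ht⟩ := sub_dvd_pow_sub_pow ((X 0 : MvPolynomial (Fin 3) L) * H) 1 N
      rw [one_pow] at ht
      rw [ht]
      exact I.mul_mem_right _ hgen2
    have heq : w = X 0 ^ N * (H ^ N * w) - (((X 0 : MvPolynomial (Fin 3) L) * H) ^ N - 1) * w := by
      rw [mul_pow]; ring
    rw [heq]
    exact I.sub_mem (I.mul_mem_left _ hw) (I.mul_mem_right _ hpow)
  have hker : I = RingHom.ker ψ := by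
    apply le_antisymm hIker
    intro w hw
    obtain ⟨N, r, hmem⟩ := hC1 w
    have hψ0 : ψ (H ^ N * w - rename Fin.succ r) = 0 := hIker hmem
    rw [map_sub, map_mul, RingHom.mem_ker.mp hw, mul_zero, zero_sub, neg_eq_zero, hψρ] at hψ0
    obtain ⟨t, rfl⟩ := hdl r hψ0
    have hmem2 : H ^ N * w ∈ I := by
      have : H ^ N * w = (H ^ N * w - rename Fin.succ (g * t)) + G * rename Fin.succ t := by
        rw [map_mul, hG]; ring
      rw [this]
      exact I.add_mem hmem (I.mul_mem_right _ hGI)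
    exact hC2 w N hmem2
  rw [hI] at hker ⊢
  rw [hker]
  exact RingHom.ker_isPrime ψ

theorem gadget_prime' (g h : MvPolynomial (Fin 2) L) (hgirr : Irreducible g) (hgh : ¬ g ∣ h) :
    (Ideal.span {rename Fin.succ g,
      (X 0 : MvPolynomial (Fin 3) L) * rename Fin.succ h - 1}).IsPrime := by
  haveI hsp : (Ideal.span {g}).IsPrime :=
    (Ideal.span_singleton_prime hgirr.ne_zero).mpr
      ((UniqueFactorizationMonoid.irreducible_iff_prime).mp hgirr)
  set Q := MvPolynomial (Fin 2) L ⧸ Ideal.span {g}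
  refine gadget_prime g h
    ((algebraMap Q (FractionRing Q)).comp (Ideal.Quotient.mk (Ideal.span {g}))) ?_ ?_ ?_
  · have h0 : Ideal.Quotient.mk (Ideal.span {g}) g = 0 :=
      Ideal.Quotient.eq_zero_iff_mem.mpr (Ideal.subset_span rfl)
    rw [RingHom.comp_apply, h0, map_zero]
  · intro w hw
    rw [RingHom.comp_apply] at hw
    have h0 : Ideal.Quotient.mk (Ideal.span {g}) w = 0 :=
      IsFractionRing.injective Q (FractionRing Q) (by rw [hw, map_zero])
    rwa [Ideal.Quotient.eq_zero_iff_mem, Ideal.mem_span_singleton] at h0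
  · intro hw
    rw [RingHom.comp_apply] at hw
    have h0 : Ideal.Quotient.mk (Ideal.span {g}) h = 0 :=
      IsFractionRing.injective Q (FractionRing Q) (by rw [hw, map_zero])
    rw [Ideal.Quotient.eq_zero_iff_mem, Ideal.mem_span_singleton] at h0
    exact hgh h0



end Gadget


theorem exists_irred_vanishing (f : MvPolynomial (Fin 2) K) (hf0 : f ≠ 0)
    (P : Fin 2 → K) (hP : eval P f = 0) :
    ∃ g, Irreducible g ∧ g ∣ f ∧ eval P g = 0 := by
  classical
  have hassoc := UniqueFactorizationMonoid.factors_prod hf0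
  obtain ⟨u, hu⟩ := hassoc
  have hev : eval P (UniqueFactorizationMonoid.factors f).prod * eval P (u : MvPolynomial (Fin 2) K) = 0 := by
    rw [← map_mul, hu, hP]
  have hune : eval P (u : MvPolynomial (Fin 2) K) ≠ 0 :=
    (u.isUnit.map (eval P)).ne_zero
  have hprod : eval P (UniqueFactorizationMonoid.factors f).prod = 0 := by
    rcases mul_eq_zero.mp hev with h | h
    · exact h
    · exact absurd h hune
  rw [← Multiset.prod_hom _ (eval P)] at hprod
  rw [Multiset.prod_eq_zero_iff] at hprod
  obtain ⟨g, hgmem, hgP⟩ := Multiset.mem_map.mp hprod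
  exact ⟨g, UniqueFactorizationMonoid.irreducible_of_factor g hgmem,
    UniqueFactorizationMonoid.dvd_of_mem_factors hgmem, hgP⟩


/-- `K` is PAC: every geometrically irreducible affine `K`-variety (cut out by an
ideal whose extension to the algebraic closure is prime) has a `K`-rational point. -/
def IsPACField (K : Type) [Field K] : Prop :=
  ∀ (n : ℕ) (p : Ideal (MvPolynomial (Fin n) K)),
    (Ideal.map (MvPolynomial.map (algebraMap K (AlgebraicClosure K))) p).IsPrime →
    ∃ x : Fin n → K, ∀ f ∈ p, MvPolynomial.eval x f = 0


theorem partC (hpac : IsPACField K) (f : MvPolynomial (Fin 2) K) (hf0 : f ≠ 0)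
    (P : Fin 2 → K) (hP : eval P f = 0)
    (hsm : eval P (pderiv 0 f) ≠ 0 ∨ eval P (pderiv 1 f) ≠ 0) :
    {Q : Fin 2 → K | eval Q f = 0}.Infinite := by
  classical
  set al := algebraMap K K̄ with hal
  set φ : MvPolynomial (Fin 2) K →+* MvPolynomial (Fin 2) K̄ := MvPolynomial.map al with hφ
  obtain ⟨g, hgirr, hgdvd, hgP⟩ := exists_irred_vanishing f hf0 P hP
  obtain ⟨m, hm⟩ := hgdvd
  have hsm' : eval P (pderiv 0 g) ≠ 0 ∨ eval P (pderiv 1 g) ≠ 0 := by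
    have key : ∀ i : Fin 2, eval P (pderiv i f) = eval P (pderiv i g) * eval P m := by
      intro i
      rw [hm, pderiv_mul, map_add, map_mul, map_mul, hgP, zero_mul, add_zero]
    rcases hsm with h | h
    · left; intro h0; rw [key 0, h0, zero_mul] at h; exact h rfl
    · right; intro h0; rw [key 1, h0, zero_mul] at h; exact h rfl
  have hφgirr : Irreducible (φ g) := by
    by_contra hni
    obtain ⟨h0, h1⟩ := partB g hgirr hni P hgP
    rcases hsm' with h | h
    · exact h h0
    · exact h h1
  have hprime : Prime (φ g) := (UniqueFactorizationMonoid.irreducible_iff_prime).mp hφgirr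
  by_contra hinf
  rw [Set.not_infinite] at hinf
  set S : Finset (Fin 2 → K) := hinf.toFinset with hS
  set hpol : (Fin 2 → K) → MvPolynomial (Fin 2) K := fun Q =>
    if φ g ∣ φ (X 0 - C (Q 0)) then X 1 - C (Q 1) else X 0 - C (Q 0) with hhpol
  have hnd : ∀ Q, ¬ φ g ∣ φ (hpol Q) := by
    intro Q
    by_cases hcond : φ g ∣ φ (X 0 - C (Q 0))
    · rw [hhpol]
      simp only [if_pos hcond]
      intro hdvd
      rw [hφ, map_sub, MvPolynomial.map_X, MvPolynomial.map_C] at hcond hdvd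
      exact two_linear hφgirr.not_isUnit hcond hdvd
    · rw [hhpol]
      simp only [if_neg hcond]
      exact hcond
  have heval : ∀ Q, eval Q (hpol Q) = 0 := by
    intro Q
    by_cases hcond : φ g ∣ φ (X 0 - C (Q 0))
    · rw [hhpol]; simp only [if_pos hcond]; simp
    · rw [hhpol]; simp only [if_neg hcond]; simp
  set h : MvPolynomial (Fin 2) K := ∏ Q ∈ S, hpol Q with hh
  have hgh : ¬ φ g ∣ φ h := by
    rw [hh, map_prod]
    refine Finset.prod_induction (fun Q => φ (hpol Q)) (fun x => ¬ φ g ∣ x) ?_ ?_ ?_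
    · intro a b ha hb hdvd
      rcases hprime.dvd_mul.mp hdvd with hd | hd
      · exact ha hd
      · exact hb hd
    · exact fun hd => hφgirr.not_isUnit (isUnit_of_dvd_one hd)
    · exact fun Q _ => hnd Q
  set pI : Ideal (MvPolynomial (Fin 3) K) :=
    Ideal.span {rename Fin.succ g, (X 0 : MvPolynomial (Fin 3) K) * rename Fin.succ h - 1} with hpI
  have hmap : Ideal.map (MvPolynomial.map (algebraMap K K̄)) pI
      = Ideal.span {rename Fin.succ (φ g),
          (X 0 : MvPolynomial (Fin 3) K̄) * rename Fin.succ (φ h) - 1} := by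
    have e1 : MvPolynomial.map (algebraMap K K̄) (rename Fin.succ g) = rename Fin.succ (φ g) := by
      rw [map_rename]
    have e2 : MvPolynomial.map (algebraMap K K̄)
          ((X 0 : MvPolynomial (Fin 3) K) * rename Fin.succ h - 1)
        = (X 0 : MvPolynomial (Fin 3) K̄) * rename Fin.succ (φ h) - 1 := by
      rw [map_sub, map_mul, map_one, MvPolynomial.map_X, map_rename]
    rw [hpI, Ideal.map_span, Set.image_insert_eq, Set.image_singleton, e1, e2]
  have hpr : (Ideal.map (MvPolynomial.map (algebraMap K K̄)) pI).IsPrime := by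
    rw [hmap]
    exact gadget_prime' (φ g) (φ h) hφgirr hgh
  obtain ⟨x, hx⟩ := hpac 3 pI hpr
  have h1 : eval (x ∘ Fin.succ) g = 0 := by
    have := hx _ (Ideal.subset_span (Set.mem_insert _ _))
    rwa [eval_rename] at this
  have h2 : x 0 * eval (x ∘ Fin.succ) h - 1 = 0 := by
    have := hx _ (Ideal.subset_span (Set.mem_insert_of_mem _ rfl))
    rwa [map_sub, map_mul, map_one, eval_X, eval_rename] at this
  set Q' : Fin 2 → K := x ∘ Fin.succ with hQ'
  have hQ'S : Q' ∈ S := by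
    rw [hS, Set.Finite.mem_toFinset]
    show eval Q' f = 0
    rw [hm, map_mul, h1, zero_mul]
  have hevalh : eval Q' h = 0 := by
    rw [hh, map_prod]
    exact Finset.prod_eq_zero hQ'S (heval Q')
  rw [hevalh, mul_zero, zero_sub, neg_eq_zero] at h2
  exact one_ne_zero h2


/-- every PAC field is ample (stated for plane curves: every plane curve
over `K` with a smooth `K`-rational point has infinitely many `K`-points), together
with the key lemma: a `K`-rational point on a `K`-irreducible but not geometrically
irreducible plane curve is a singular point (both partial derivatives vanish there),
since it must lie on at least two geometric components. -/
theorem pac_implies_ample_and_K_point_on_nongeometrically_irreducible_curve_is_singular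
    (K : Type) [Field K] :
    (IsPACField K →
      ∀ f : MvPolynomial (Fin 2) K, f ≠ 0 →
        ∀ P : Fin 2 → K, MvPolynomial.eval P f = 0 →
          (MvPolynomial.eval P (MvPolynomial.pderiv 0 f) ≠ 0 ∨
           MvPolynomial.eval P (MvPolynomial.pderiv 1 f) ≠ 0) →
          {Q : Fin 2 → K | MvPolynomial.eval Q f = 0}.Infinite) ∧
    (∀ f : MvPolynomial (Fin 2) K, Irreducible f →
      ¬ Irreducible (MvPolynomial.map (algebraMap K (AlgebraicClosure K)) f) →
      ∀ P : Fin 2 → K, MvPolynomial.eval P f = 0 →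
        MvPolynomial.eval P (MvPolynomial.pderiv 0 f) = 0 ∧
        MvPolynomial.eval P (MvPolynomial.pderiv 1 f) = 0) := by
  constructor
  · intro hpac f hf0 P hP hsm
    exact partC hpac f hf0 P hP hsm
  · intro f hf hni P hP
    exact partB f hf hni P hP
end
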